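/- Misclassified underdispersion: if μ_x = μ_y, r = R, σ_x > σ_y > 0, r < 1, and 2 r σ_x > σ_x + σ_y, then E[δ_τ] < 0 (i.e. 'Spread' is less than 'Error'), yet the calibrating rescaling X_i* = (σ_y/σ_x) X_i strictly reduces the expected ensemble variance: (σ_y/σ_x)² σ_e² < σ_e², where σ_e² = σ_x² − c > 0. -/

import Mathlib

open MeasureTheory ENNReal

/-- Covariance of two real random variables. -/
noncomputable def cov {Ω : Type*} [MeasurableSpace Ω] (μ : Measure Ω) (f g : Ω → ℝ) : ℝ :=
  ∫ ω, (f ω - ∫ x, f x ∂μ) * (g ω - ∫ x, g x ∂μ) ∂μ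

/-- Ensemble mean. -/
noncomputable def ensMean {Ω : Type*} {n : ℕ} (X : Fin n → Ω → ℝ) (ω : Ω) : ℝ :=
  (∑ i, X i ω) / n

/-- Unbiased ensemble variance. -/
noncomputable def ensVar {Ω : Type*} {n : ℕ} (X : Fin n → Ω → ℝ) (ω : Ω) : ℝ :=
  (∑ i, (X i ω - ensMean X ω) ^ 2) / ((n : ℝ) - 1)

/-- The Spread-Error statistic `δ_τ = ((n+1)/n) S_e² − (X̄ − Y)²`. -/
noncomputable def spreadError {Ω : Type*} {n : ℕ} (X : Fin n → Ω → ℝ) (Y : Ω → ℝ) (ω : Ω) : ℝ :=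
  (((n : ℝ) + 1) / n) * ensVar X ω - (ensMean X ω - Y ω) ^ 2

lemma memL2_int_mul {Ω : Type*} [MeasurableSpace Ω] {μ : Measure Ω} {f g : Ω → ℝ}
    (hf : MemLp f 2 μ) (hg : MemLp g 2 μ) :
    Integrable (fun ω => f ω * g ω) μ := by
  have h := (((hf.add hg).integrable_sq.sub hf.integrable_sq).sub hg.integrable_sq).div_const 2
  have heq : (fun ω => f ω * g ω)
      = fun ω => (((f ω + g ω) ^ 2 - f ω ^ 2) - g ω ^ 2) / 2 := by
    funext ω; ring
  rw [heq]; exact h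

lemma cov_eq {Ω : Type*} [MeasurableSpace Ω] (μ : Measure Ω) [IsProbabilityMeasure μ]
    {f g : Ω → ℝ} (hf : MemLp f 2 μ) (hg : MemLp g 2 μ) :
    ∫ ω, f ω * g ω ∂μ = cov μ f g + (∫ ω, f ω ∂μ) * (∫ ω, g ω ∂μ) := by
  have h2 : (1 : ℝ≥0∞) ≤ 2 := by norm_num
  have hfi : Integrable f μ := hf.integrable h2
  have hgi : Integrable g μ := hg.integrable h2
  have hfg : Integrable (fun ω => f ω * g ω) μ := memL2_int_mul hf hg
  set a := ∫ ω, f ω ∂μ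
  set b := ∫ ω, g ω ∂μ
  have hexp : ∀ ω, (f ω - a) * (g ω - b)
      = f ω * g ω - a * g ω - b * f ω + a * b := by intro ω; ring
  unfold cov
  change _ = ∫ ω, (f ω - a) * (g ω - b) ∂μ + a * b
  simp_rw [hexp]
  have i1 : Integrable (fun ω => f ω * g ω - a * g ω) μ := hfg.sub (hgi.const_mul a)
  have i2 : Integrable (fun ω => f ω * g ω - a * g ω - b * f ω) μ := i1.sub (hfi.const_mul b)
  rw [integral_add i2 (integrable_const _), integral_sub i1 (hfi.const_mul b),
    integral_sub hfg (hgi.const_mul a), integral_const_mul, integral_const_mul,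
    integral_const, probReal_univ]
  simp only [ENNReal.toReal_one, smul_eq_mul, one_mul]
  ring

set_option maxHeartbeats 1000000 in
/-- Misclassified underdispersion: if `μ_x = μ_y`, `r = R`, `σ_x > σ_y > 0`, `r < 1`, and
`2 r σ_x > σ_x + σ_y`, then `E[δ_τ] < 0` ("Spread" less than "Error"), yet the calibrating
rescaling strictly reduces the expected ensemble variance: `(σ_y/σ_x)² σ_e² < σ_e²`,
where `σ_e² = σ_x² − c > 0`. -/
theorem misclassified_underdispersion
    {Ω : Type*} [MeasurableSpace Ω] (μ : Measure Ω) [IsProbabilityMeasure μ]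
    (n : ℕ) (hn : 2 ≤ n) (X : Fin n → Ω → ℝ) (Y : Ω → ℝ)
    (hL2 : ∀ i, MemLp (X i) 2 μ) (hYL2 : MemLp Y 2 μ)
    (μx σx2 c μy σy2 γ σx σy : ℝ) (hσx2 : 0 < σx2) (hσy2 : 0 < σy2)
    (hmean : ∀ i, ∫ ω, X i ω ∂μ = μx)
    (hvar : ∀ i, cov μ (X i) (X i) = σx2)
    (hcov : ∀ i j, i ≠ j → cov μ (X i) (X j) = c)
    (hmeanY : ∫ ω, Y ω ∂μ = μy)
    (hvarY : cov μ Y Y = σy2)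
    (hcovXY : ∀ i, cov μ (X i) Y = γ)
    (hμ : μx = μy)
    (hσx : σx ^ 2 = σx2) (hσy : σy ^ 2 = σy2)
    (hσxy : σx > σy) (hσy_pos : 0 < σy)
    (hrR : c / σx2 = γ / (σx * σy))
    (hr_lt_one : c / σx2 < 1)
    (hinfl : 2 * (c / σx2) * σx > σx + σy) :
    (∫ ω, spreadError X Y ω ∂μ) < 0 ∧
    0 < σx2 - c ∧
    (σy / σx) ^ 2 * (σx2 - c) < σx2 - c := by
  have hσx_pos : 0 < σx := lt_trans hσy_pos hσxy
  have hn0 : (0:ℝ) < n := by exact_mod_cast (by omega : 0 < n)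
  have hn1 : (1:ℝ) < n := by exact_mod_cast (by omega : 1 < n)
  have hnne : (n:ℝ) ≠ 0 := ne_of_gt hn0
  have hn1ne : (n:ℝ) - 1 ≠ 0 := sub_ne_zero.mpr (ne_of_gt hn1)
  -- integrability
  have hXX : ∀ i j, Integrable (fun ω => X i ω * X j ω) μ :=
    fun i j => memL2_int_mul (hL2 i) (hL2 j)
  have hXYi : ∀ i, Integrable (fun ω => X i ω * Y ω) μ :=
    fun i => memL2_int_mul (hL2 i) hYL2
  have hYY : Integrable (fun ω => Y ω * Y ω) μ := memL2_int_mul hYL2 hYL2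
  -- moments
  have mXX : ∀ i, ∫ ω, X i ω * X i ω ∂μ = σx2 + μx * μx := fun i => by
    rw [cov_eq μ (hL2 i) (hL2 i), hvar i, hmean i]
  have mXXij : ∀ i j, i ≠ j → ∫ ω, X i ω * X j ω ∂μ = c + μx * μx := fun i j hij => by
    rw [cov_eq μ (hL2 i) (hL2 j), hcov i j hij, hmean i, hmean j]
  have mXY : ∀ i, ∫ ω, X i ω * Y ω ∂μ = γ + μx * μy := fun i => by
    rw [cov_eq μ (hL2 i) hYL2, hcovXY i, hmean i, hmeanY]
  have mYY : ∫ ω, Y ω * Y ω ∂μ = σy2 + μy * μy := by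
    rw [cov_eq μ hYL2 hYL2, hvarY, hmeanY]
  -- the sum process
  set S : Ω → ℝ := fun ω => ∑ i, X i ω with hSdef
  have hSL2 : MemLp S 2 μ := memLp_finset_sum Finset.univ (fun i _ => hL2 i)
  have hSS : Integrable (fun ω => S ω * S ω) μ := memL2_int_mul hSL2 hSL2
  have hSY : Integrable (fun ω => S ω * Y ω) μ := memL2_int_mul hSL2 hYL2
  have hsumXX : Integrable (fun ω => ∑ i, X i ω * X i ω) μ :=
    integrable_finset_sum _ (fun i _ => hXX i i)
  -- pointwise decomposition
  have hpt : ∀ ω, spreadError X Y ω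
      = (((n:ℝ)+1)/((n:ℝ)*((n:ℝ)-1))) * (∑ i, X i ω * X i ω)
        + (-(((n:ℝ)+1)/((n:ℝ)^2*((n:ℝ)-1))) - 1/(n:ℝ)^2) * (S ω * S ω)
        + (2/(n:ℝ)) * (S ω * Y ω) - Y ω * Y ω := by
    intro ω
    have hm : ensMean X ω = S ω / n := rfl
    have hsum : ∑ i, (X i ω - ensMean X ω) ^ 2
        = (∑ i, X i ω * X i ω) - S ω * S ω / n := by
      have he : ∀ i, (X i ω - ensMean X ω) ^ 2
          = X i ω * X i ω - (2 * S ω / n) * X i ω + (S ω / n) ^ 2 := by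
        intro i; rw [hm]; ring
      simp_rw [he]
      rw [Finset.sum_add_distrib, Finset.sum_sub_distrib, ← Finset.mul_sum,
        Finset.sum_const, Finset.card_univ, Fintype.card_fin, nsmul_eq_mul]
      rw [show (∑ i, X i ω) = S ω from rfl]
      field_simp
      ring
    unfold spreadError ensVar
    rw [hsum, hm]
    field_simp
    ring
  -- integral of the decomposition
  have hIspread : ∫ ω, spreadError X Y ω ∂μ
      = (((n:ℝ)+1)/((n:ℝ)*((n:ℝ)-1))) * (∑ i, ∫ ω, X i ω * X i ω ∂μ)
        + (-(((n:ℝ)+1)/((n:ℝ)^2*((n:ℝ)-1))) - 1/(n:ℝ)^2) * (∫ ω, S ω * S ω ∂μ)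
        + (2/(n:ℝ)) * (∫ ω, S ω * Y ω ∂μ) - ∫ ω, Y ω * Y ω ∂μ := by
    simp_rw [hpt]
    have i1 : Integrable (fun ω =>
        (((n:ℝ)+1)/((n:ℝ)*((n:ℝ)-1))) * (∑ i, X i ω * X i ω)) μ := hsumXX.const_mul _
    have i2 : Integrable (fun ω =>
        (-(((n:ℝ)+1)/((n:ℝ)^2*((n:ℝ)-1))) - 1/(n:ℝ)^2) * (S ω * S ω)) μ := hSS.const_mul _
    have i3 : Integrable (fun ω => (2/(n:ℝ)) * (S ω * Y ω)) μ := hSY.const_mul _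
    have i12 : Integrable (fun ω =>
        (((n:ℝ)+1)/((n:ℝ)*((n:ℝ)-1))) * (∑ i, X i ω * X i ω)
          + (-(((n:ℝ)+1)/((n:ℝ)^2*((n:ℝ)-1))) - 1/(n:ℝ)^2) * (S ω * S ω)) μ := i1.add i2
    have i123 : Integrable (fun ω =>
        (((n:ℝ)+1)/((n:ℝ)*((n:ℝ)-1))) * (∑ i, X i ω * X i ω)
          + (-(((n:ℝ)+1)/((n:ℝ)^2*((n:ℝ)-1))) - 1/(n:ℝ)^2) * (S ω * S ω)
          + (2/(n:ℝ)) * (S ω * Y ω)) μ := i12.add i3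
    rw [integral_sub i123 hYY, integral_add i12 i3,
      integral_add i1 i2, integral_const_mul, integral_const_mul, integral_const_mul,
      integral_finset_sum _ (fun i _ => hXX i i)]
  -- evaluate the moment sums
  have hIsumXX : ∑ i, ∫ ω, X i ω * X i ω ∂μ = (n:ℝ) * (σx2 + μx * μx) := by
    rw [Finset.sum_congr rfl (fun i _ => mXX i), Finset.sum_const, Finset.card_univ,
      Fintype.card_fin, nsmul_eq_mul]
  have hISS : ∫ ω, S ω * S ω ∂μ
      = (n:ℝ) * (σx2 + μx * μx) + (n:ℝ) * ((n:ℝ) - 1) * (c + μx * μx) := by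
    have hexp : ∀ ω, S ω * S ω = ∑ i, ∑ j, X i ω * X j ω := by
      intro ω; rw [hSdef]; rw [Finset.sum_mul_sum]
    simp_rw [hexp]
    rw [integral_finset_sum _ (fun i _ => integrable_finset_sum _ (fun j _ => hXX i j))]
    have inner : ∀ i : Fin n, ∫ ω, ∑ j, X i ω * X j ω ∂μ
        = (σx2 + μx * μx) + ((n:ℝ) - 1) * (c + μx * μx) := by
      intro i
      rw [integral_finset_sum _ (fun j _ => hXX i j),
        ← Finset.add_sum_erase Finset.univ _ (Finset.mem_univ i), mXX i]
      have hrest : ∑ j ∈ Finset.univ.erase i, ∫ ω, X i ω * X j ω ∂μ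
          = ∑ _j ∈ Finset.univ.erase i, (c + μx * μx) :=
        Finset.sum_congr rfl (fun j hj => mXXij i j (Ne.symm (Finset.ne_of_mem_erase hj)))
      rw [hrest, Finset.sum_const, Finset.card_erase_of_mem (Finset.mem_univ i),
        Finset.card_univ, Fintype.card_fin, nsmul_eq_mul, Nat.cast_sub (by omega : 1 ≤ n)]
      norm_num
    rw [Finset.sum_congr rfl (fun i _ => inner i), Finset.sum_const, Finset.card_univ,
      Fintype.card_fin, nsmul_eq_mul]
    ring
  have hISY : ∫ ω, S ω * Y ω ∂μ = (n:ℝ) * (γ + μx * μy) := by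
    have hexp : ∀ ω, S ω * Y ω = ∑ i, X i ω * Y ω := by
      intro ω; rw [hSdef]; exact Finset.sum_mul _ _ _
    simp_rw [hexp]
    rw [integral_finset_sum _ (fun i _ => hXYi i),
      Finset.sum_congr rfl (fun i _ => mXY i), Finset.sum_const, Finset.card_univ,
      Fintype.card_fin, nsmul_eq_mul]
  -- total expectation
  have hE : ∫ ω, spreadError X Y ω ∂μ = σx2 - 2*c - σy2 + 2*γ := by
    rw [hIspread, hIsumXX, hISS, hISY, mYY, hμ]
    field_simp
    ring
  -- derive γ = c * σy / σx
  have hγ : γ = c * σy / σx := by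
    have h1 : γ = c / σx2 * (σx * σy) := by
      rw [hrR]
      field_simp
    rw [h1, ← hσx]
    field_simp
  -- derive 2c > (σx+σy)σx
  have h2c : (σx + σy) * σx < 2 * c := by
    have heq : 2 * (c / σx2) * σx = 2 * c / σx := by
      rw [← hσx]; field_simp
    rw [heq] at hinfl
    exact (lt_div_iff₀ hσx_pos).mp hinfl
  clear hXX hXYi hYY mXX mXXij mXY mYY hSL2 hSS hSY hsumXX hpt hIspread hIsumXX hISS hISY
    hmean hvar hcov hmeanY hvarY hcovXY hL2 hYL2 hSdef S hrR
  refine ⟨?_, ?_, ?_⟩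
  · rw [hE, ← hσx, ← hσy, hγ]
    have hnum : σx ^ 2 - 2 * c - σy ^ 2 + 2 * (c * σy / σx)
        = (σx^3 - 2*c*σx - σy^2*σx + 2*c*σy) / σx := by
      field_simp
    rw [hnum]
    apply div_neg_of_neg_of_pos _ hσx_pos
    have hfac : σx^3 - 2*c*σx - σy^2*σx + 2*c*σy
        = -((σx - σy) * (2*c - (σx + σy)*σx)) := by ring
    rw [hfac]
    exact neg_lt_zero.mpr (mul_pos (sub_pos.mpr hσxy) (sub_pos.mpr h2c))
  · have : c < σx2 := (div_lt_one hσx2).mp hr_lt_one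
    linarith
  · have hpos : 0 < σx2 - c := by
      have : c < σx2 := (div_lt_one hσx2).mp hr_lt_one
      linarith
    have hlt : (σy / σx) ^ 2 < 1 := by
      rw [div_pow]
      apply (div_lt_one (by positivity)).mpr
      nlinarith
    have := mul_lt_mul_of_pos_right hlt hpos
    simpa using this
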